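/- Fix A > C > 0, D > 0, d ∈ ℝ, ε ∈ ℝ, set 𝕀 = diag(A, C, C) and 𝐈(Γ) = 𝕀 + D·E − D·Γ Γᵀ. Let Ω, Γ : ℝ → ℝ³ be differentiable curves with |Γ(t)| = 1, set 𝐌(t) = 𝐈(Γ(t))Ω(t) + dΓ(t), and suppose 𝐌̇(t) = 𝐌(t) × Ω(t) and Γ̇(t) = ε Γ(t) × Ω(t) for all t. Define ρ(s) = √(C(A+D) + D(A−C)s²), F(t) = ρ(Γ₁(t)) Ω₁(t), and G(t) = (A − C) Ω₁(t) Γ₁(t) + C ⟨Ω(t), Γ(t)⟩. Then F is differentiable and for all t, ε ρ(Γ₁(t)) Ḟ(t) = (ε − 1)(D G(t) − C d) Γ̇₁(t). -/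

import Mathlib

/-!
In the symmetric case `𝐌 = (C + D) Ω + (A - C) Ω₁ e₁ + (d - D ⟨Γ, Ω⟩) Γ`. Since `Γ̇ = ε Γ × Ω` is
orthogonal to `Ω`, `d⟨Γ, Ω⟩/dt = ⟨Γ, Ω̇⟩`, so `𝐌̇ = 𝐌 × Ω` becomes a linear equation for `Ω̇`.
Its first component and its component along `Γ` (where `|Γ| = 1` is used) eliminate `⟨Γ, Ω̇⟩`
and leave `ρ(Γ₁)² Ω̇₁ = (C (1 - ε) (d - D ⟨Γ, Ω⟩) - D (A - C) Γ₁ Ω₁) (Γ × Ω)₁`. Together with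
`ρ ρ' = D (A - C) s` this gives `ρ Ḟ = ρ ρ' Γ̇₁ Ω₁ + ρ² Ω̇₁ = (ε - 1) (D G - C d) (Γ × Ω)₁`.
-/

open Matrix

/-- The modified inertia operator `𝐈(Γ) = diag(A,B,C) + D·E − D·Γ Γᵀ` of the
spherical ball bearing problem with one ball. -/
noncomputable def modInertia (A B C D : ℝ) (Γ : Fin 3 → ℝ) : Matrix (Fin 3) (Fin 3) ℝ :=
  Matrix.diagonal ![A, B, C] + D • (1 : Matrix (Fin 3) (Fin 3) ℝ) - D • vecMulVec Γ Γ

theorem HasDerivAt.dotProduct {𝕜 ι : Type*} [NontriviallyNormedField 𝕜] [Fintype ι]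
    {u v : 𝕜 → ι → 𝕜} {u' v' : ι → 𝕜} {t : 𝕜}
    (hu : HasDerivAt u u' t) (hv : HasDerivAt v v' t) :
    HasDerivAt (fun s => u s ⬝ᵥ v s) (u' ⬝ᵥ v t + u t ⬝ᵥ v') t := by
  have h := HasDerivAt.fun_sum (u := Finset.univ) fun i _ =>
    (hasDerivAt_pi.mp hu i).fun_mul (hasDerivAt_pi.mp hv i)
  rw [Finset.sum_add_distrib] at h
  exact h

theorem HasDerivAt.sqrt_const_add_mul_sq {a b t f' : ℝ} {f : ℝ → ℝ} (hf : HasDerivAt f f' t)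
    (h : 0 < a + b * f t ^ 2) :
    HasDerivAt (fun s => √(a + b * f s ^ 2)) (b * f t * f' / √(a + b * f t ^ 2)) t := by
  convert ((hf.fun_pow 2).const_mul b).const_add a |>.sqrt h.ne' using 1
  field_simp
  ring

theorem modInertia_mulVec_of_symm (A C D : ℝ) (Γ Ω : Fin 3 → ℝ) :
    modInertia A C C D Γ *ᵥ Ω =
      (C + D) • Ω + ((A - C) * Ω 0) • Pi.single 0 1 - (D * (Γ ⬝ᵥ Ω)) • Γ := by
  rw [modInertia, sub_mulVec, add_mulVec, smul_mulVec, smul_mulVec, one_mulVec,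
    vecMulVec_mulVec]
  ext i
  fin_cases i <;> simp [mulVec_diagonal, dotProduct_comm Γ] <;> ring

section SymmetricBallBearing

variable {A C D d ε t : ℝ} {Ω Γ : ℝ → Fin 3 → ℝ} {Ω' : Fin 3 → ℝ}

theorem hasDerivAt_dotProduct_of_poisson (hΩ : HasDerivAt Ω Ω' t)
    (hΓ : HasDerivAt Γ (ε • (Γ t ⨯₃ Ω t)) t) :
    HasDerivAt (fun s => Γ s ⬝ᵥ Ω s) (Γ t ⬝ᵥ Ω') t := by
  simpa [dotProduct_comm _ (Ω t), dot_cross_self] using hΓ.dotProduct hΩ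

theorem euler_eq_of_modInertia_symm (hΩ : HasDerivAt Ω Ω' t)
    (hΓ : HasDerivAt Γ (ε • (Γ t ⨯₃ Ω t)) t)
    (hMdot : HasDerivAt (fun s => modInertia A C C D (Γ s) *ᵥ Ω s + d • Γ s)
      ((modInertia A C C D (Γ t) *ᵥ Ω t + d • Γ t) ⨯₃ Ω t) t) :
    (C + D) • Ω' + ((A - C) * Ω' 0) • Pi.single 0 1 - (D * (Γ t ⬝ᵥ Ω')) • Γ t =
      ((A - C) * Ω t 0) • (Pi.single 0 1 ⨯₃ Ω t) +
        ((1 - ε) * (d - D * (Γ t ⬝ᵥ Ω t))) • (Γ t ⨯₃ Ω t) := by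
  simp only [modInertia_mulVec_of_symm] at hMdot
  have hK := hasDerivAt_dotProduct_of_poisson hΩ hΓ
  have hM := (((hΩ.const_smul (C + D)).add
    (((hasDerivAt_pi.mp hΩ 0).const_mul (A - C)).smul_const (Pi.single 0 1 : Fin 3 → ℝ))).sub
    ((hK.const_mul D).smul hΓ)).add (hΓ.const_smul d)
  have h := hMdot.unique hM
  simp only [map_add, map_sub, map_smul, LinearMap.add_apply, LinearMap.sub_apply,
    LinearMap.smul_apply, cross_self, smul_zero] at h
  linear_combination (norm := module) -h

theorem rho_sq_mul_deriv_omega_zero (hunit : Γ t ⬝ᵥ Γ t = 1) (hΩ : HasDerivAt Ω Ω' t)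
    (hΓ : HasDerivAt Γ (ε • (Γ t ⨯₃ Ω t)) t)
    (hMdot : HasDerivAt (fun s => modInertia A C C D (Γ s) *ᵥ Ω s + d • Γ s)
      ((modInertia A C C D (Γ t) *ᵥ Ω t + d • Γ t) ⨯₃ Ω t) t) :
    (C * (A + D) + D * (A - C) * Γ t 0 ^ 2) * Ω' 0 =
      (C * (1 - ε) * (d - D * (Γ t ⬝ᵥ Ω t)) - D * (A - C) * Γ t 0 * Ω t 0) *
        (Γ t ⨯₃ Ω t) 0 := by
  have h := euler_eq_of_modInertia_symm hΩ hΓ hMdot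
  have hcross₀ : (Pi.single 0 1 ⨯₃ Ω t) 0 = 0 := by simp [cross_apply]
  have htriple : Γ t ⬝ᵥ (Pi.single 0 1 ⨯₃ Ω t) = -(Γ t ⨯₃ Ω t) 0 := by
    rw [triple_product_permutation, single_dotProduct, ← cross_anticomm, one_mul, Pi.neg_apply]
  have hfirst := congrFun h 0
  have halongΓ := congrArg (Γ t ⬝ᵥ ·) h
  simp only [Pi.add_apply, Pi.sub_apply, Pi.smul_apply, smul_eq_mul, Pi.single_eq_same,
    hcross₀] at hfirst
  simp only [dotProduct_add, dotProduct_sub, dotProduct_smul, smul_eq_mul, dotProduct_single,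
    hunit, htriple, dot_self_cross] at halongΓ
  linear_combination C * hfirst + D * Γ t 0 * halongΓ

end SymmetricBallBearing

theorem spherical_ball_bearing_F_derivative
    (A C D : ℝ) (hAC : C < A) (hC : 0 < C) (hD : 0 < D) (d ε : ℝ)
    (Ω Γ : ℝ → Fin 3 → ℝ)
    (hΩ : Differentiable ℝ Ω)
    (hunit : ∀ t : ℝ, Γ t ⬝ᵥ Γ t = 1)
    (M : ℝ → Fin 3 → ℝ)
    (hM : ∀ t : ℝ, M t = (modInertia A C C D (Γ t)).mulVec (Ω t) + d • Γ t)
    (hMdot : ∀ t : ℝ, HasDerivAt M (M t ⨯₃ Ω t) t)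
    (hΓdot : ∀ t : ℝ, HasDerivAt Γ (ε • (Γ t ⨯₃ Ω t)) t)
    (ρ : ℝ → ℝ) (hρ : ∀ s : ℝ, ρ s = Real.sqrt (C * (A + D) + D * (A - C) * s ^ 2))
    (F : ℝ → ℝ) (hF : ∀ t : ℝ, F t = ρ (Γ t 0) * Ω t 0)
    (G : ℝ → ℝ) (hG : ∀ t : ℝ, G t = (A - C) * Ω t 0 * Γ t 0 + C * (Ω t ⬝ᵥ Γ t)) :
    Differentiable ℝ F ∧
      ∀ t : ℝ, ε * ρ (Γ t 0) * deriv F t =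
        (ε - 1) * (D * G t - C * d) * (ε • (Γ t ⨯₃ Ω t)) 0 := by
  obtain rfl : M = fun t => modInertia A C C D (Γ t) *ᵥ Ω t + d • Γ t := funext hM
  obtain rfl : ρ = fun s => √(C * (A + D) + D * (A - C) * s ^ 2) := funext hρ
  obtain rfl : F = fun t => √(C * (A + D) + D * (A - C) * Γ t 0 ^ 2) * Ω t 0 := funext hF
  have hpos (s : ℝ) : 0 < C * (A + D) + D * (A - C) * s ^ 2 :=
    add_pos_of_pos_of_nonneg (mul_pos hC (by linarith))
      (mul_nonneg (mul_pos hD (sub_pos.2 hAC)).le (sq_nonneg s))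
  have hFdot (t : ℝ) := ((hasDerivAt_pi.mp (hΓdot t) 0).sqrt_const_add_mul_sq
    (hpos (Γ t 0))).fun_mul (hasDerivAt_pi.mp (hΩ t).hasDerivAt 0)
  refine ⟨fun t => (hFdot t).differentiableAt, fun t => ?_⟩
  have key := rho_sq_mul_deriv_omega_zero (hunit t) (hΩ t).hasDerivAt (hΓdot t) (hMdot t)
  have hρ_sq := Real.sq_sqrt (hpos (Γ t 0)).le
  have hρ_ne := (Real.sqrt_pos.2 (hpos (Γ t 0))).ne'
  rw [(hFdot t).deriv, hG, dotProduct_comm]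
  simp only [Pi.smul_apply, smul_eq_mul]
  field_simp
  linear_combination ε * key + ε * deriv Ω t 0 * hρ_sq
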